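/- For every t > 0 and every x ∈ X one has D⁺_t(x)/t ≤ |∂⁻ f_t|(x) + tilt(f)(x). -/

import Mathlib

/-!
Setting: `(X, d)` is a complete length metric space, `f : X × X → ℝ` is lower
semicontinuous, bounded from below, and satisfies the reverse triangle inequality
`f(x,z) ≥ f(x,y) + f(y,z)`.  For `t > 0` set `F(t,x;y) := f(x,y) + d(x,y)²/(2t)`,
`f_t(x) := inf_y F(t,x;y)`, and `f_0(x) := f(x,x)`.  `D⁺_t(x)` (resp. `D⁻_t(x)`)
is the largest (resp. smallest) value of `limsup_n d(x,y_n)` (resp. `liminf_n d(x,y_n)`)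
among minimizing sequences `(y_n)` of `F(t,x;·)`.
-/

open Filter Topology Metric MeasureTheory
open scoped ENNReal NNReal

noncomputable section

/-- A metric space is a *length space* if the distance between any two points equals the
infimum of the lengths (total variations) of continuous curves joining them. -/
def IsLengthSpace (X : Type*) [MetricSpace X] : Prop :=
  ∀ x y : X,
    ENNReal.ofReal (dist x y) =
      ⨅ γ : { γ : ℝ → X // ContinuousOn γ (Set.Icc 0 1) ∧ γ 0 = x ∧ γ 1 = y },
        eVariationOn γ.1 (Set.Icc 0 1)

variable {X : Type*} [MetricSpace X]

/-- `FH f t x y = f(x,y) + d(x,y)² / (2t)`. -/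
def FH (f : X × X → ℝ) (t : ℝ) (x y : X) : ℝ :=
  f (x, y) + dist x y ^ 2 / (2 * t)

/-- `ft f t x = inf_y (f(x,y) + d(x,y)²/(2t))` for `t ≠ 0`, and `ft f 0 x = f(x,x)`. -/
def ft (f : X × X → ℝ) (t : ℝ) (x : X) : ℝ :=
  if t = 0 then f (x, x) else ⨅ y : X, FH f t x y

/-- `y : ℕ → X` is a minimizing sequence for `F(t,x;·)`. -/
def MinSeq (f : X × X → ℝ) (t : ℝ) (x : X) (y : ℕ → X) : Prop :=
  Tendsto (fun n => FH f t x (y n)) atTop (𝓝 (ft f t x))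

/-- `D⁺_t(x)`: the largest value of `limsup_n d(x, y_n)` among minimizing sequences. -/
def Dplus (f : X × X → ℝ) (t : ℝ) (x : X) : ℝ :=
  sSup { L : ℝ | ∃ y : ℕ → X, MinSeq f t x y ∧
    Filter.limsup (fun n => dist x (y n)) atTop = L }

/-- `D⁻_t(x)`: the smallest value of `liminf_n d(x, y_n)` among minimizing sequences. -/
def Dminus (f : X × X → ℝ) (t : ℝ) (x : X) : ℝ :=
  sInf { L : ℝ | ∃ y : ℕ → X, MinSeq f t x y ∧
    Filter.liminf (fun n => dist x (y n)) atTop = L }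

/-- Descending slope `|∂⁻ g|(x) = limsup_{y→x} (g(y) - g(x))⁻ / d(x,y)`, valued in `[0,∞]`. -/
def descSlope (g : X → ℝ) (x : X) : ℝ≥0∞ :=
  Filter.limsup (fun y => ENNReal.ofReal ((g x - g y) / dist x y)) (𝓝[≠] x)

/-- The tilt `tilt(f)(x) = limsup_{y→x} (f(x,y))⁻ / d(x,y)`, valued in `[0,∞]`. -/
def tilt (f : X × X → ℝ) (x : X) : ℝ≥0∞ :=
  Filter.limsup (fun y => ENNReal.ofReal ((-f (x, y)) / dist x y)) (𝓝[≠] x)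

/-! Let `L = limsup d(x,y_n)` along a minimizing sequence and let `δ > 0` be small. Take
`y = y_n` with `d(x,y) > L - δ` and `F(t,x;y) ≤ f_t(x) + δ²`; since `X` is a length space there is
`z` with `d(x,z) = δ` and `d(z,y) ≤ d(x,y) - δ + δ²`. Testing `f_t(z)` with `y` and using the
reverse triangle inequality `f(z,y) ≤ f(x,y) - f(x,z)` gives
`(f_t(x) - f_t(z))/δ + (-f(x,z))/δ ≥ (1-δ)(2L-3δ)/(2t) - δ`, and the right side tends to `L/t`. -/

-- `ENNReal.limsup_add_le` needs a `CountableInterFilter`; `𝓝[≠] x` need not be one.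
theorem ENNReal.limsup_add_le' {ι : Type*} {l : Filter ι} (u v : ι → ℝ≥0∞) :
    limsup (u + v) l ≤ limsup u l + limsup v l := by
  refine ENNReal.le_of_forall_pos_le_add fun ε hε hfin => ?_
  have hε2 : (ε : ℝ≥0∞) / 2 ≠ 0 := by simp [hε.ne']
  have hu := eventually_lt_of_limsup_lt
    (ENNReal.lt_add_right (ENNReal.add_lt_top.1 hfin).1.ne hε2)
  have hv := eventually_lt_of_limsup_lt
    (ENNReal.lt_add_right (ENNReal.add_lt_top.1 hfin).2.ne hε2)
  refine limsup_le_of_le (by isBoundedDefault) ?_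
  filter_upwards [hu, hv] with i hui hvi
  calc u i + v i ≤ (limsup u l + ε / 2) + (limsup v l + ε / 2) := add_le_add hui.le hvi.le
    _ = limsup u l + limsup v l + ε := by rw [add_add_add_comm, ENNReal.add_halves]

theorem edist_add_edist_le_eVariationOn_Icc {α E : Type*} [LinearOrder α]
    [PseudoEMetricSpace E] (γ : α → E) {a s b : α} (hs : s ∈ Set.Icc a b) :
    edist (γ a) (γ s) + edist (γ s) (γ b) ≤ eVariationOn γ (Set.Icc a b) := by
  have hsplit := eVariationOn.Icc_add_Icc γ hs.1 hs.2 (Set.mem_univ s)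
  simp only [Set.univ_inter] at hsplit
  rw [← hsplit]
  exact add_le_add
    (eVariationOn.edist_le γ (Set.left_mem_Icc.2 hs.1) (Set.right_mem_Icc.2 hs.1))
    (eVariationOn.edist_le γ (Set.left_mem_Icc.2 hs.2) (Set.right_mem_Icc.2 hs.2))

theorem IsLengthSpace.exists_dist_eq_dist_le (hX : IsLengthSpace X) (x y : X) {δ ε : ℝ}
    (hδ0 : 0 ≤ δ) (hδ : δ ≤ dist x y) (hε : 0 < ε) :
    ∃ z : X, dist x z = δ ∧ dist z y ≤ dist x y - δ + ε := by
  have hlt : (⨅ γ : { γ : ℝ → X // ContinuousOn γ (Set.Icc 0 1) ∧ γ 0 = x ∧ γ 1 = y },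
      eVariationOn γ.1 (Set.Icc 0 1)) < ENNReal.ofReal (dist x y + ε) := by
    rw [← hX x y]
    exact ENNReal.ofReal_lt_ofReal_iff'.2 ⟨by linarith, by positivity⟩
  obtain ⟨⟨γ, hγc, hγ0, hγ1⟩, hγ⟩ := iInf_lt_iff.1 hlt
  have hcont : ContinuousOn (fun s => dist x (γ s)) (Set.Icc 0 1) :=
    (continuous_const.dist continuous_id).comp_continuousOn hγc
  obtain ⟨s, hs, hsδ⟩ := intermediate_value_Icc zero_le_one hcont
    (show δ ∈ Set.Icc (dist x (γ 0)) (dist x (γ 1)) by rw [hγ0, hγ1, dist_self]; exact ⟨hδ0, hδ⟩)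
  refine ⟨γ s, hsδ, ?_⟩
  have hsum := (edist_add_edist_le_eVariationOn_Icc γ hs).trans_lt hγ
  rw [hγ0, hγ1, edist_dist, edist_dist, ← ENNReal.ofReal_add dist_nonneg dist_nonneg,
    ENNReal.ofReal_lt_ofReal_iff (by positivity)] at hsum
  linarith

section HopfLax

variable {f : X × X → ℝ} {t C : ℝ}

theorem ft_le_FH (hC : ∀ p, C ≤ f p) (ht : 0 < t) (x y : X) : ft f t x ≤ FH f t x y := by
  rw [ft, if_neg ht.ne']
  refine ciInf_le ⟨C, ?_⟩ y
  rintro _ ⟨z, rfl⟩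
  exact (hC _).trans (le_add_of_nonneg_right (by positivity))

theorem ft_le_FH_sub_add (hC : ∀ p, C ≤ f p) (hrev : ∀ x y z, f (x, y) + f (y, z) ≤ f (x, z))
    (ht : 0 < t) (x z y : X) :
    ft f t z ≤ FH f t x y - f (x, z) + (dist z y ^ 2 - dist x y ^ 2) / (2 * t) := by
  have hz := ft_le_FH hC ht z y
  have hxzy := hrev x z y
  rw [sub_div]
  unfold FH at *
  linarith

theorem exists_dist_eq_le_quotients (hX : IsLengthSpace X) (hC : ∀ p, C ≤ f p)
    (hrev : ∀ x y z, f (x, y) + f (y, z) ≤ f (x, z)) (ht : 0 < t) {x y : X} {L δ : ℝ}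
    (hδ0 : 0 < δ) (hδ1 : δ ≤ 1) (hδL : 2 * δ ≤ L) (hxy : L - δ < dist x y)
    (hmin : FH f t x y - ft f t x ≤ δ ^ 2) :
    ∃ z, dist x z = δ ∧
      (1 - δ) * (2 * L - 3 * δ) / (2 * t) - δ ≤ (ft f t x - ft f t z) / δ + -f (x, z) / δ := by
  obtain ⟨z, hxz, hzy⟩ :=
    hX.exists_dist_eq_dist_le x y hδ0.le (by linarith) (pow_pos hδ0 2)
  refine ⟨z, hxz, ?_⟩
  have hz := ft_le_FH_sub_add hC hrev ht x z y
  have hzy2 : dist z y ^ 2 ≤ (dist x y - δ + δ ^ 2) ^ 2 := pow_le_pow_left₀ dist_nonneg hzy 2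
  have hδ' : 0 ≤ δ * (1 - δ) := mul_nonneg hδ0.le (by linarith)
  rw [← add_div, le_div_iff₀ hδ0]
  calc ((1 - δ) * (2 * L - 3 * δ) / (2 * t) - δ) * δ
      = δ * (1 - δ) * (2 * L - 3 * δ) / (2 * t) - δ ^ 2 := by ring
    _ ≤ δ * (1 - δ) * (2 * dist x y - δ + δ ^ 2) / (2 * t) - (FH f t x y - ft f t x) := by
        gcongr
        nlinarith
    _ = (dist x y ^ 2 - (dist x y - δ + δ ^ 2) ^ 2) / (2 * t) - (FH f t x y - ft f t x) := by
        ring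
    _ ≤ (dist x y ^ 2 - dist z y ^ 2) / (2 * t) - (FH f t x y - ft f t x) := by gcongr
    _ ≤ ft f t x - ft f t z + -f (x, z) := by
        rw [sub_div] at hz ⊢
        linarith

theorem frequently_le_quotients (hX : IsLengthSpace X) (hC : ∀ p, C ≤ f p)
    (hrev : ∀ x y z, f (x, y) + f (y, z) ≤ f (x, z)) (ht : 0 < t) {x : X} {y : ℕ → X}
    (hy : MinSeq f t x y) {L r : ℝ} (hL : limsup (fun n => dist x (y n)) atTop = L)
    (hL0 : 0 < L) (hr : r < L / t) :
    ∃ᶠ z in 𝓝[≠] x, r ≤ (ft f t x - ft f t z) / dist x z + -f (x, z) / dist x z := by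
  have hsmall : ∀ᶠ δ in 𝓝 (0 : ℝ),
      δ < 1 ∧ 2 * δ < L ∧ r < (1 - δ) * (2 * L - 3 * δ) / (2 * t) - δ := by
    refine (eventually_lt_nhds one_pos).and ((eventually_lt_nhds (half_pos hL0)).mono ?_ |>.and ?_)
    · exact fun δ hδ => by linarith
    · refine continuousAt_const.eventually_lt (by fun_prop) ?_
      refine hr.trans_eq ?_
      field_simp
      ring
  rw [nhdsWithin_basis_ball.frequently_iff]
  intro ρ hρ
  obtain ⟨δ, ⟨hδ1, hδL, hrδ⟩, hδ0, hδρ⟩ :=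
    ((hsmall.filter_mono nhdsWithin_le_nhds).and (Ioo_mem_nhdsGT hρ)).exists
  have hfar : ∃ᶠ n in atTop, L - δ < dist x (y n) :=
    frequently_lt_of_lt_limsup (isCoboundedUnder_le_of_le atTop fun n => dist_nonneg)
      (by linarith)
  have hnear : ∀ᶠ n in atTop, FH f t x (y n) < ft f t x + δ ^ 2 :=
    hy.eventually_lt_const (lt_add_of_pos_right _ (pow_pos hδ0 2))
  obtain ⟨n, hxy, hmin⟩ := (hfar.and_eventually hnear).exists
  obtain ⟨z, hxz, hz⟩ := exists_dist_eq_le_quotients hX hC hrev ht hδ0 hδ1.le hδL.le hxy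
    (by linarith)
  refine ⟨z, ⟨?_, ?_⟩, ?_⟩
  · rwa [mem_ball, dist_comm, hxz]
  · rintro rfl
    rw [dist_self] at hxz
    exact hδ0.ne hxz
  · rw [hxz]
    exact hrδ.le.trans hz

theorem ofReal_limsup_dist_div_le (hX : IsLengthSpace X) (hC : ∀ p, C ≤ f p)
    (hrev : ∀ x y z, f (x, y) + f (y, z) ≤ f (x, z)) (ht : 0 < t) {x : X} {y : ℕ → X}
    (hy : MinSeq f t x y) :
    ENNReal.ofReal (limsup (fun n => dist x (y n)) atTop / t) ≤
      descSlope (fun z => ft f t z) x + tilt f x := by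
  set L := limsup (fun n => dist x (y n)) atTop with hL
  rcases le_or_gt L 0 with hL0 | hL0
  · rw [ENNReal.ofReal_of_nonpos (div_nonpos_of_nonpos_of_nonneg hL0 ht.le)]
    exact zero_le
  refine le_of_forall_lt_imp_le_of_dense fun b hb => ?_
  have hb_top := hb.ne_top
  rw [ENNReal.lt_ofReal_iff_toReal_lt hb_top] at hb
  rw [← ENNReal.ofReal_toReal hb_top]
  refine (le_limsup_of_frequently_le' ?_).trans (ENNReal.limsup_add_le' _ _)
  refine (frequently_le_quotients hX hC hrev ht hy hL.symm hL0 hb).mono fun z hz => ?_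
  exact (ENNReal.ofReal_le_ofReal hz).trans ENNReal.ofReal_add_le

end HopfLax

theorem statement3_general (hX : IsLengthSpace X)
    (f : X × X → ℝ)
    (hbdd : ∃ C : ℝ, ∀ p : X × X, C ≤ f p)
    (hrev : ∀ x y z : X, f (x, y) + f (y, z) ≤ f (x, z))
    (t : ℝ) (ht : 0 < t) (x : X) :
    ENNReal.ofReal (Dplus f t x / t) ≤ descSlope (fun z => ft f t z) x + tilt f x := by
  obtain ⟨C, hC⟩ := hbdd
  set S := descSlope (fun z => ft f t z) x + tilt f x
  rcases eq_or_ne S ⊤ with hS | hS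
  · rw [hS]
    exact le_top
  have hbound : ∀ L ∈ { L : ℝ | ∃ y : ℕ → X, MinSeq f t x y ∧
      limsup (fun n => dist x (y n)) atTop = L }, L ≤ S.toReal * t := by
    rintro _ ⟨y, hy, rfl⟩
    have hyS : _ ≤ S := ofReal_limsup_dist_div_le hX hC hrev ht hy
    rw [← ENNReal.ofReal_toReal hS, ENNReal.ofReal_le_ofReal_iff ENNReal.toReal_nonneg] at hyS
    exact (div_le_iff₀ ht).1 hyS
  calc ENNReal.ofReal (Dplus f t x / t) ≤ ENNReal.ofReal S.toReal :=
        ENNReal.ofReal_le_ofReal ((div_le_iff₀ ht).2 (Real.sSup_le hbound (by positivity)))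
    _ = S := ENNReal.ofReal_toReal hS

/-- For every `t > 0` and every `x ∈ X` one has `D⁺_t(x)/t ≤ |∂⁻ f_t|(x) + tilt(f)(x)`. -/
theorem statement3 [CompleteSpace X] (hX : IsLengthSpace X)
    (f : X × X → ℝ) (hlsc : LowerSemicontinuous f)
    (hbdd : ∃ C : ℝ, ∀ p : X × X, C ≤ f p)
    (hrev : ∀ x y z : X, f (x, y) + f (y, z) ≤ f (x, z))
    (t : ℝ) (ht : 0 < t) (x : X) :
    ENNReal.ofReal (Dplus f t x / t) ≤ descSlope (fun z => ft f t z) x + tilt f x :=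
  statement3_general hX f hbdd hrev t ht x
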